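/- Let I be an ideal on ℕ such that I* ⊆ I, where I* = {F ⊆ ℕ : {φ_n : n ∈ F} is nowhere dense in 𝕏(I)}. Then the space 𝕐(I*) is nodec: every nowhere dense subset of 𝕐(I*) is closed in 𝕐(I*). -/

import Mathlib

/-- Points of the space `2^ℕ × ℕ`. -/
abbrev Pt : Type := (ℕ → Bool) × ℕ

/-- `𝕏`: the family of finite unions of basic clopen rectangles `[s] × {m}`
(including `∅`), viewed inside the cube `2^(2^ℕ × ℕ)` as `Pt → Bool`.
A piece is coded by `(s, len, m)`: the rectangle `[s ↾ len] × {m}`. -/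
def XX : Set (Pt → Bool) :=
  {θ | ∃ L : List ((ℕ → Bool) × ℕ × ℕ),
    ∀ p : Pt, θ p = true ↔ ∃ q ∈ L, p.2 = q.2.2 ∧ ∀ i < q.2.1, p.1 i = q.1 i}

/-- An ideal on ℕ containing all finite sets. -/
def IsIdeal (I : Set (Set ℕ)) : Prop :=
  (∀ A ∈ I, ∀ B, B ⊆ A → B ∈ I) ∧
  (∀ A ∈ I, ∀ B ∈ I, A ∪ B ∈ I) ∧
  (∀ A : Set ℕ, A.Finite → A ∈ I)

/-- The topology `ρ_I` on the cube `2^(2^ℕ × ℕ)`, generated by the sets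
`(α,p)⁺` and `(α,p)⁻` for `α` the characteristic function of a member of `I`. -/
def rho (I : Set (Set ℕ)) : TopologicalSpace (Pt → Bool) :=
  TopologicalSpace.generateFrom
    {S | ∃ A ∈ I, ∃ p : ℕ,
      S = {θ | θ (A.boolIndicator, p) = true} ∨ S = {θ | θ (A.boolIndicator, p) = false}}

/-- The subspace topology induced by `ρ_I` on a subset of the cube. -/
def subTop (S : Set (Pt → Bool)) (I : Set (Set ℕ)) : TopologicalSpace {θ // θ ∈ S} :=
  TopologicalSpace.induced Subtype.val (rho I)

/-- `ψ_n = φ_n ∪ ({α : α(n) = 1} × ℕ)`, for an enumeration `φ` of `𝕏`. -/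
def psi (φ : ℕ → Pt → Bool) (n : ℕ) : Pt → Bool := fun p => φ n p || p.1 n

/-- `𝕐 = {ψ_n : n ∈ ℕ}`. -/
def YY (φ : ℕ → Pt → Bool) : Set (Pt → Bool) := Set.range (psi φ)

/-- `K* = {F ⊆ ℕ : {φ_n : n ∈ F} is nowhere dense in 𝕏(K)}`. -/
def starIdeal (φ : ℕ → Pt → Bool) (K : Set (Set ℕ)) : Set (Set ℕ) :=
  {F | @IsNowhereDense _ (subTop XX K) {θ : {θ // θ ∈ XX} | ∃ n ∈ F, φ n = θ.1}}

/-! Every `φ_n`, a finite union of rectangles, vanishes at `(F, p)` for large `p`, whereas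
`ψ_n (F, p) = 1` for all `p` when `n ∈ F`. Hence `{ψ_n : n ∈ F}` is an intersection of the clopen
sets `(F, p)⁺` and is closed in `𝕐(K)` as soon as `F ∈ K`. It therefore suffices to show that the
index set `F` of a nowhere dense `S ⊆ 𝕐(I*)` lies in `I*`, i.e. that `{φ_n : n ∈ F}` is nowhere
dense in `𝕏(I)`. The bridge is that `ψ_n` and `φ_n` agree at every `(A, p)` with `n ∉ A`, and
that `I*` is closed under finite unions: inside a basic open set of `𝕏(I)`, the conditions with
sets in `I*` are met by some `ψ_m`, so they extend to a basic set `[d]` of `𝕐(I*)` missing `S`;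
then `[d]`, intersected with the original basic set and with the complement of the closure of
the nowhere dense `{φ_n : n ∈ ⋃ d}`, is a nonempty open set missing `{φ_n : n ∈ F}`. -/

open Set Filter Topology

section NowhereDense

variable {X : Type*} [TopologicalSpace X] {s t U : Set X}

lemma isNowhereDense_iff_dense_compl_closure : IsNowhereDense s ↔ Dense (closure s)ᶜ :=
  interior_eq_empty_iff_dense_compl

lemma IsNowhereDense.union (hs : IsNowhereDense s) (ht : IsNowhereDense t) :
    IsNowhereDense (s ∪ t) := by
  rw [isNowhereDense_iff_dense_compl_closure] at *
  rw [closure_union, compl_union]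
  exact hs.inter_of_isOpen_left ht isClosed_closure.isOpen_compl

lemma IsNowhereDense.nonempty_diff_closure (hs : IsNowhereDense s) (hU : IsOpen U)
    (hne : U.Nonempty) : (U \ closure s).Nonempty :=
  (isNowhereDense_iff_dense_compl_closure.1 hs).inter_open_nonempty U hU hne

lemma isNowhereDense_of_forall_exists_disjoint
    (h : ∀ U, IsOpen U → U.Nonempty → ∃ V ⊆ U, IsOpen V ∧ V.Nonempty ∧ Disjoint V s) :
    IsNowhereDense s := by
  rw [isNowhereDense_iff_dense_compl_closure, dense_iff_inter_open]
  intro U hU hne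
  obtain ⟨V, hVU, hV, ⟨x, hx⟩, hVs⟩ := h U hU hne
  exact ⟨x, hVU hx, (hVs.closure_right hV).notMem_of_mem_left hx⟩

end NowhereDense

lemma exists_mem_XX_forall_eq (θ : Pt → Bool) (l : List Pt) :
    ∃ θ' ∈ XX, ∀ q ∈ l, θ' q = θ q := by
  classical
  obtain ⟨N, hN⟩ : ∃ N, ∀ a ∈ l, ∀ b ∈ l, a.1 ≠ b.1 → ∃ i < N, a.1 i ≠ b.1 i := by
    refine Eventually.exists (f := atTop) ?_
    refine (eventually_all_finite l.finite_toSet).2 fun a _ =>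
      (eventually_all_finite l.finite_toSet).2 fun b _ => ?_
    by_cases hab : a.1 = b.1
    · exact Eventually.of_forall fun _ h => (h hab).elim
    obtain ⟨i, hi⟩ := Function.ne_iff.1 hab
    exact eventually_atTop.2 ⟨i + 1, fun N hN _ => ⟨i, by omega, hi⟩⟩
  -- `θ'` is the union of the rectangles `[a ↾ N] × {a.2}` over the points `a ∈ l` with `θ a`.
  refine ⟨fun q => decide (∃ a ∈ l, θ a = true ∧ q.2 = a.2 ∧ ∀ i < N, q.1 i = a.1 i),
    ⟨(l.filter (θ ·)).map fun a => (a.1, N, a.2), fun q => ?_⟩, fun q hq => ?_⟩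
  · simp [and_assoc]
  · cases hθq : θ q
    · simp only [decide_eq_false_iff_not, not_exists, not_and]
      intro a ha hθa h2 h1
      by_cases h : q.1 = a.1
      · rw [Prod.ext h h2, hθa] at hθq
        exact Bool.noConfusion hθq
      · obtain ⟨i, hi, hne⟩ := hN q hq a ha h
        exact hne (h1 i hi)
    · exact decide_eq_true ⟨q, hq, hθq, rfl, fun _ _ => rfl⟩

/-- The condition `θ (A, p) = b` on `θ : Pt → Bool`, with `A` standing for its indicator. -/
structure Condition where
  set : Set ℕ
  coord : ℕ
  val : Bool

noncomputable def Condition.pt (c : Condition) : Pt := (c.set.boolIndicator, c.coord)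

lemma Condition.set_eq_of_pt_eq {u v : Condition} (h : u.pt = v.pt) : u.set = v.set := by
  rw [← u.set.preimage_boolIndicator_true, ← v.set.preimage_boolIndicator_true]
  exact congrArg (· ⁻¹' {true}) (congrArg Prod.fst h)

def cyl (l : List Condition) : Set (Pt → Bool) := {θ | ∀ c ∈ l, θ c.pt = c.val}

def support (l : List Condition) : Set ℕ := {n | ∃ c ∈ l, n ∈ c.set}

lemma cyl_append (l l' : List Condition) : cyl (l ++ l') = cyl l ∩ cyl l' := by
  ext θ
  simp [cyl, or_imp, forall_and]

lemma nonempty_cyl_inter_XX {l : List Condition} (h : (cyl l).Nonempty) :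
    (cyl l ∩ XX).Nonempty := by
  obtain ⟨θ, hθ⟩ := h
  obtain ⟨θ', hθ'X, hθ'⟩ := exists_mem_XX_forall_eq θ (l.map Condition.pt)
  exact ⟨θ', fun c hc => (hθ' c.pt (List.mem_map_of_mem hc)).trans (hθ c hc), hθ'X⟩

lemma nonempty_cyl_append {l l' : List Condition} {θ θ' : Pt → Bool} (hθ : θ ∈ cyl l)
    (hθ' : θ' ∈ cyl l') (h : ∀ u ∈ l, ∀ v ∈ l', u.pt = v.pt → u ∈ l') :
    (cyl (l ++ l')).Nonempty := by
  classical
  refine ⟨fun q => if ∃ v ∈ l', v.pt = q then θ' q else θ q, ?_⟩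
  rw [cyl_append]
  constructor
  · intro u hu
    dsimp only
    split_ifs with hq
    · obtain ⟨v, hv, hvu⟩ := hq
      exact hθ' u (h u hu v hv hvu.symm)
    · exact hθ u hu
  · intro v hv
    simp only [show ∃ w ∈ l', w.pt = v.pt from ⟨v, hv, rfl⟩, if_true, hθ' v hv]

section Rho

variable {K : Set (Set ℕ)}

lemma isOpen_setOf_apply_pt_eq {c : Condition} (hc : c.set ∈ K) :
    IsOpen[rho K] {θ | θ c.pt = c.val} := by
  rcases c with ⟨A, p, _ | _⟩
  exacts [.basic _ ⟨A, hc, p, .inr rfl⟩, .basic _ ⟨A, hc, p, .inl rfl⟩]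

lemma isOpen_cyl {l : List Condition} (hl : ∀ c ∈ l, c.set ∈ K) : IsOpen[rho K] (cyl l) := by
  let _ := rho K
  have : cyl l = ⋂ c ∈ {c | c ∈ l}, {θ | θ c.pt = c.val} := by ext; simp [cyl]
  rw [this]
  exact l.finite_toSet.isOpen_biInter fun c hc => isOpen_setOf_apply_pt_eq (hl c hc)

lemma exists_cyl_subset {U : Set (Pt → Bool)} (hU : IsOpen[rho K] U) {θ : Pt → Bool}
    (hθ : θ ∈ U) : ∃ l, (∀ c ∈ l, c.set ∈ K) ∧ θ ∈ cyl l ∧ cyl l ⊆ U := by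
  induction hU generalizing θ with
  | basic s hs =>
    obtain ⟨A, hA, p, hs⟩ := hs
    obtain ⟨b, rfl⟩ : ∃ b, s = {θ | θ (A.boolIndicator, p) = b} := hs.elim (⟨true, ·⟩) (⟨false, ·⟩)
    exact ⟨[⟨A, p, b⟩], by simpa using hA, by simpa [cyl, Condition.pt] using hθ,
      fun θ' h => by simpa [cyl, Condition.pt] using h⟩
  | univ => exact ⟨[], by simp, by simp [cyl], subset_univ _⟩
  | inter s t _ _ ihs iht =>
    obtain ⟨l, hl, hθl, hls⟩ := ihs hθ.1
    obtain ⟨l', hl', hθl', hl's⟩ := iht hθ.2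
    refine ⟨l ++ l', fun c hc => (List.mem_append.1 hc).elim (hl c) (hl' c), ?_, ?_⟩ <;>
      rw [cyl_append]
    exacts [⟨hθl, hθl'⟩, inter_subset_inter hls hl's]
  | sUnion S _ ih =>
    obtain ⟨s, hs, hθs⟩ := hθ
    obtain ⟨l, hl, hθl, hls⟩ := ih s hs hθs
    exact ⟨l, hl, hθl, hls.trans (subset_sUnion_of_mem hs)⟩

lemma isOpen_val_preimage_cyl (S : Set (Pt → Bool)) {l : List Condition}
    (hl : ∀ c ∈ l, c.set ∈ K) : IsOpen[subTop S K] (Subtype.val ⁻¹' cyl l) :=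
  ⟨cyl l, isOpen_cyl hl, rfl⟩

lemma exists_val_preimage_cyl_subset {S : Set (Pt → Bool)} {U : Set {θ // θ ∈ S}}
    (hU : IsOpen[subTop S K] U) {x : {θ // θ ∈ S}} (hx : x ∈ U) :
    ∃ l, (∀ c ∈ l, c.set ∈ K) ∧ x.1 ∈ cyl l ∧ Subtype.val ⁻¹' cyl l ⊆ U := by
  obtain ⟨V, hV, rfl⟩ := hU
  obtain ⟨l, hl, hxl, hlV⟩ := exists_cyl_subset hV hx
  exact ⟨l, hl, hxl, preimage_mono hlV⟩

end Rho

section Psi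

variable {φ : ℕ → Pt → Bool} {K : Set (Set ℕ)}

def phiSet (φ : ℕ → Pt → Bool) (F : Set ℕ) : Set {θ // θ ∈ XX} := {x | ∃ n ∈ F, φ n = x.1}

def psiSet (φ : ℕ → Pt → Bool) (F : Set ℕ) : Set {θ // θ ∈ YY φ} :=
  {y | ∃ n ∈ F, psi φ n = y.1}

lemma support_cons (c : Condition) (l : List Condition) :
    support (c :: l) = c.set ∪ support l := by
  ext n
  simp [support]

lemma phiSet_union (φ : ℕ → Pt → Bool) (F G : Set ℕ) :
    phiSet φ (F ∪ G) = phiSet φ F ∪ phiSet φ G := by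
  ext x
  simp [phiSet, or_and_right, exists_or]

lemma support_mem_starIdeal {l : List Condition} (hl : ∀ c ∈ l, c.set ∈ starIdeal φ K) :
    support l ∈ starIdeal φ K := by
  let _ := subTop XX K
  induction l with
  | nil => simp [starIdeal, support]
  | cons c l ih =>
    show IsNowhereDense (phiSet φ _)
    rw [support_cons, phiSet_union]
    exact (hl c List.mem_cons_self).union (ih fun c hc => hl c (List.mem_cons_of_mem _ hc))

lemma psi_mem_cyl {n : ℕ} {l : List Condition} (h : φ n ∈ cyl l) (hn : n ∉ support l) :
    psi φ n ∈ cyl l := by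
  intro c hc
  have : c.set.boolIndicator n = false :=
    (c.set.notMem_iff_boolIndicator n).1 fun h => hn ⟨c, hc, h⟩
  change (φ n c.pt || c.set.boolIndicator n) = c.val
  rw [h c hc, this, Bool.or_false]

lemma exists_apply_eq_false_of_mem_XX {θ : Pt → Bool} (hθ : θ ∈ XX) (α : ℕ → Bool) :
    ∃ p, θ (α, p) = false := by
  obtain ⟨L, hL⟩ := hθ
  obtain ⟨p, hp⟩ := Infinite.exists_notMem_finset (L.map fun q => q.2.2).toFinset
  refine ⟨p, Bool.eq_false_iff.2 fun h => hp ?_⟩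
  obtain ⟨q, hq, rfl, -⟩ := (hL _).1 h
  exact List.mem_toFinset.2 (List.mem_map_of_mem hq)

lemma eq_psiSet (S : Set {θ // θ ∈ YY φ}) : S = psiSet φ {n | ∃ y ∈ S, y.1 = psi φ n} := by
  ext ⟨_, n, rfl⟩
  refine ⟨fun h => ⟨n, ⟨_, h, rfl⟩, rfl⟩, ?_⟩
  rintro ⟨m, ⟨y, hy, hym⟩, hmn⟩
  rwa [Subtype.ext (hym.trans hmn)] at hy

lemma psi_apply_boolIndicator {A : Set ℕ} {n : ℕ} (hn : n ∈ A) (p : ℕ) :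
    psi φ n (A.boolIndicator, p) = true := by
  simp [psi, (A.mem_iff_boolIndicator n).1 hn]

lemma isClosed_psiSet (hφ : ∀ n, φ n ∈ XX) {F : Set ℕ} (hF : F ∈ K) :
    IsClosed[subTop (YY φ) K] (psiSet φ F) := by
  let _ := rho K
  let _ := subTop (YY φ) K
  have : psiSet φ F = ⋂ p, Subtype.val ⁻¹' {θ | θ (F.boolIndicator, p) = true} := by
    ext ⟨_, n, rfl⟩
    simp only [psiSet, mem_iInter, mem_preimage, mem_ofPred_eq]
    refine ⟨fun ⟨m, hm, hmn⟩ p => hmn ▸ psi_apply_boolIndicator hm p, fun h => ⟨n, ?_, rfl⟩⟩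
    obtain ⟨p, hp⟩ := exists_apply_eq_false_of_mem_XX (hφ n) F.boolIndicator
    simpa [psi, hp, ← Set.mem_iff_boolIndicator] using h p
  rw [this]
  refine isClosed_iInter fun p => IsClosed.preimage continuous_subtype_val ?_
  rw [← isOpen_compl_iff]
  convert isOpen_setOf_apply_pt_eq (c := ⟨F, p, false⟩) hF using 1
  ext
  simp [Condition.pt]

end Psi

section Transfer

variable {φ : ℕ → Pt → Bool}

lemma exists_psi_mem_cyl {K : Set (Set ℕ)} (hran : XX ⊆ range φ) {l : List Condition}
    (hlK : ∀ c ∈ l, c.set ∈ K) (hl : ∀ c ∈ l, c.set ∈ starIdeal φ K)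
    (hne : (cyl l ∩ XX).Nonempty) : ∃ m, psi φ m ∈ cyl l := by
  let _ := subTop XX K
  obtain ⟨θ, hθl, hθ⟩ := hne
  obtain ⟨x, hxl, hx⟩ := (support_mem_starIdeal hl).nonempty_diff_closure
    (isOpen_val_preimage_cyl XX hlK) ⟨⟨θ, hθ⟩, hθl⟩
  obtain ⟨m, hm⟩ := hran x.2
  exact ⟨m, psi_mem_cyl (hm ▸ hxl) fun hmG => hx (subset_closure ⟨m, hmG, hm⟩)⟩

lemma exists_cyl_psi_notMem {K : Set (Set ℕ)} (hran : XX ⊆ range φ) {l : List Condition}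
    (hlK : ∀ c ∈ l, c.set ∈ K) (hl : ∀ c ∈ l, c.set ∈ starIdeal φ K)
    (hne : (cyl l ∩ XX).Nonempty) {F : Set ℕ}
    (hF : @IsNowhereDense _ (subTop (YY φ) (starIdeal φ K)) (psiSet φ F)) :
    ∃ d, (∀ v ∈ d, v.set ∈ starIdeal φ K) ∧ l ⊆ d ∧ (cyl d ∩ YY φ).Nonempty ∧
      ∀ n ∈ F, psi φ n ∉ cyl d := by
  let _ := subTop (YY φ) (starIdeal φ K)
  obtain ⟨m, hm⟩ := exists_psi_mem_cyl hran hlK hl hne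
  obtain ⟨y, hyl, hy⟩ := hF.nonempty_diff_closure (isOpen_val_preimage_cyl _ hl)
    ⟨⟨psi φ m, m, rfl⟩, hm⟩
  obtain ⟨d, hd, hyd, hdW⟩ := exists_val_preimage_cyl_subset
    ((isOpen_val_preimage_cyl _ hl).sdiff isClosed_closure) ⟨hyl, hy⟩
  refine ⟨l ++ d, fun v hv => (List.mem_append.1 hv).elim (hl v) (hd v),
    List.subset_append_left l d, ⟨y.1, cyl_append l d ▸ ⟨hyl, hyd⟩, y.2⟩, fun n hnF hn => ?_⟩
  have hnd : (⟨psi φ n, n, rfl⟩ : {θ // θ ∈ YY φ}) ∈ Subtype.val ⁻¹' cyl d :=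
    (cyl_append l d ▸ hn).2
  exact (hdW hnd).2 (subset_closure ⟨n, hnF, rfl⟩)

lemma exists_subset_cyl_disjoint_phiSet {K : Set (Set ℕ)} {c d : List Condition}
    (hc : ∀ u ∈ c, u.set ∈ K) (hdK : ∀ v ∈ d, v.set ∈ K) (hd : ∀ v ∈ d, v.set ∈ starIdeal φ K)
    (hne : (cyl (c ++ d) ∩ XX).Nonempty) {F : Set ℕ} (hdF : ∀ n ∈ F, psi φ n ∉ cyl d) :
    ∃ V ⊆ Subtype.val ⁻¹' cyl c, IsOpen[subTop XX K] V ∧ V.Nonempty ∧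
      Disjoint V (phiSet φ F) := by
  let _ := subTop XX K
  have hcdK : ∀ u ∈ c ++ d, u.set ∈ K := fun u hu => (List.mem_append.1 hu).elim (hc u) (hdK u)
  obtain ⟨θ, hθ, hθX⟩ := hne
  obtain ⟨x, hx, hxd⟩ := (support_mem_starIdeal hd).nonempty_diff_closure
    (isOpen_val_preimage_cyl XX hcdK) ⟨⟨θ, hθX⟩, hθ⟩
  refine ⟨Subtype.val ⁻¹' cyl (c ++ d) \ closure (phiSet φ (support d)),
    fun z hz => (cyl_append c d ▸ hz.1).1,
    (isOpen_val_preimage_cyl XX hcdK).sdiff isClosed_closure, ⟨x, hx, hxd⟩, ?_⟩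
  refine Set.disjoint_left.2 fun z ⟨hzcd, hzd⟩ ⟨n, hnF, hnz⟩ => ?_
  by_cases hn : n ∈ support d
  · exact hzd (subset_closure ⟨n, hn, hnz⟩)
  · exact hdF n hnF (psi_mem_cyl (hnz ▸ (cyl_append c d ▸ hzcd).2) hn)

lemma mem_starIdeal_of_isNowhereDense_psiSet {I : Set (Set ℕ)} (hran : XX ⊆ range φ)
    (hstar : starIdeal φ I ⊆ I) {F : Set ℕ}
    (hF : @IsNowhereDense _ (subTop (YY φ) (starIdeal φ I)) (psiSet φ F)) :
    F ∈ starIdeal φ I := by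
  classical
  let _ := subTop XX I
  apply isNowhereDense_of_forall_exists_disjoint
  rintro U hU ⟨x₀, hx₀⟩
  obtain ⟨c, hcI, hx₀c, hcU⟩ := exists_val_preimage_cyl_subset hU hx₀
  set c₀ := c.filter (·.set ∈ starIdeal φ I)
  have hc₀ : ∀ u ∈ c₀, u.set ∈ starIdeal φ I := by simp [c₀]
  obtain ⟨d, hd, hc₀d, ⟨θ, hθd, -⟩, hdF⟩ := exists_cyl_psi_notMem hran
    (fun u hu => hstar (hc₀ u hu)) hc₀
    ⟨x₀, fun u hu => hx₀c u (List.mem_of_mem_filter hu), x₀.2⟩ hF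
  -- a point constrained by both `c` and `d` carries a set of `I*`, so its condition is in `c₀ ⊆ d`
  have hcd : (cyl (c ++ d)).Nonempty := by
    refine nonempty_cyl_append hx₀c hθd fun u hu v hv huv => hc₀d ?_
    exact List.mem_filter.2 ⟨hu, by simpa [Condition.set_eq_of_pt_eq huv] using hd v hv⟩
  obtain ⟨V, hVc, hV⟩ := exists_subset_cyl_disjoint_phiSet hcI (fun v hv => hstar (hd v hv)) hd
    (nonempty_cyl_inter_XX hcd) hdF
  exact ⟨V, hVc.trans hcU, hV⟩

end Transfer

theorem YY_star_nodec_general (I : Set (Set ℕ))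
    (φ : ℕ → Pt → Bool) (hran : Set.range φ = XX)
    (hstar : starIdeal φ I ⊆ I) :
    ∀ S : Set {θ // θ ∈ YY φ},
      @IsNowhereDense _ (subTop (YY φ) (starIdeal φ I)) S →
      @IsClosed _ (subTop (YY φ) (starIdeal φ I)) S := by
  intro S hS
  rw [eq_psiSet S] at hS ⊢
  exact isClosed_psiSet (fun n => hran ▸ mem_range_self n)
    (mem_starIdeal_of_isNowhereDense_psiSet hran.ge hstar hS)

/-- If `I* ⊆ I`, then `𝕐(I*)` is nodec: every nowhere dense subset is closed. -/
theorem YY_star_nodec (I : Set (Set ℕ)) (hI : IsIdeal I)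
    (φ : ℕ → Pt → Bool) (hinj : Function.Injective φ) (hran : Set.range φ = XX)
    (hstar : starIdeal φ I ⊆ I) :
    ∀ S : Set {θ // θ ∈ YY φ},
      @IsNowhereDense _ (subTop (YY φ) (starIdeal φ I)) S →
      @IsClosed _ (subTop (YY φ) (starIdeal φ I)) S :=
  YY_star_nodec_general I φ hran hstar
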